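/- Lyapunov's theorem for stability: if f_u(0) = 0 and there exists a continuously differentiable V : D → ℝ with V(0) = 0, V(x) > 0 and ∇_{f_u}V(x) < 0 for all x ∈ D \ {0}, then the origin is a stable equilibrium: for every ε > 0 there exists δ > 0 such that every solution with ‖x(0)‖ < δ satisfies ‖x(t)‖ < ε for all t ≥ 0. -/

import Mathlib

/-- Lie derivative of `V` along vector field `f` at `x`. -/
noncomputable def lieDeriv {n : ℕ} (V : EuclideanSpace ℝ (Fin n) → ℝ)
    (f : EuclideanSpace ℝ (Fin n) → EuclideanSpace ℝ (Fin n))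
    (x : EuclideanSpace ℝ (Fin n)) : ℝ :=
  ∑ i, fderiv ℝ V x (EuclideanSpace.single i 1) * f x i

lemma clm_apply_eq_sum {n : ℕ} (L : EuclideanSpace ℝ (Fin n) →L[ℝ] ℝ)
    (v : EuclideanSpace ℝ (Fin n)) :
    L v = ∑ i, L (EuclideanSpace.single i 1) * v i := by
  have h : v = ∑ i, v i • EuclideanSpace.single i (1 : ℝ) := by
    have := (EuclideanSpace.basisFun (Fin n) ℝ).sum_repr v
    simpa [EuclideanSpace.basisFun_apply, EuclideanSpace.basisFun_repr] using this.symm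
  conv_lhs => rw [h]
  rw [map_sum]
  simp [mul_comm]

lemma fderiv_apply_eq_lieDeriv {n : ℕ} (V : EuclideanSpace ℝ (Fin n) → ℝ)
    (f : EuclideanSpace ℝ (Fin n) → EuclideanSpace ℝ (Fin n))
    (y : EuclideanSpace ℝ (Fin n)) :
    fderiv ℝ V y (f y) = lieDeriv V f y :=
  clm_apply_eq_sum _ _

/-- Lyapunov's theorem for stability of the origin. -/
theorem lyapunov_stability {n : ℕ}
    (D : Set (EuclideanSpace ℝ (Fin n))) (hD : IsOpen D)
    (h0 : (0 : EuclideanSpace ℝ (Fin n)) ∈ D)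
    (f : EuclideanSpace ℝ (Fin n) → EuclideanSpace ℝ (Fin n))
    (K : NNReal) (hf : LipschitzOnWith K f D) (hf0 : f 0 = 0)
    (V : EuclideanSpace ℝ (Fin n) → ℝ) (hVcd : ContDiffOn ℝ 1 V D)
    (hV0 : V 0 = 0)
    (hVpos : ∀ y ∈ D, y ≠ 0 → 0 < V y)
    (hLie : ∀ y ∈ D, y ≠ 0 → lieDeriv V f y < 0) :
    ∀ ε > (0 : ℝ), ∃ δ > (0 : ℝ),
      ∀ x : ℝ → EuclideanSpace ℝ (Fin n),
        (∀ t ≥ (0 : ℝ), x t ∈ D) →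
        (∀ t ≥ (0 : ℝ), HasDerivAt x (f (x t)) t) →
        ‖x 0‖ < δ → ∀ t ≥ (0 : ℝ), ‖x t‖ < ε := by
  intro ε hε
  by_cases hn : n = 0
  · subst hn
    refine ⟨1, one_pos, fun x _ _ _ t ht => ?_⟩
    have hx : x t = 0 := Subsingleton.elim _ _
    rw [hx]
    simpa using hε
  · obtain ⟨r0, hr0, hball⟩ := Metric.isOpen_iff.1 hD 0 h0
    set r : ℝ := min ε r0 / 2 with hrdef
    have hrpos : 0 < r := by
      have := lt_min hε hr0
      positivity
    have hrε : r < ε := by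
      have h1 : min ε r0 ≤ ε := min_le_left _ _
      have := lt_min hε hr0
      simp only [hrdef]
      linarith
    have hrr0 : r < r0 := by
      have h1 : min ε r0 ≤ r0 := min_le_right _ _
      have := lt_min hε hr0
      simp only [hrdef]
      linarith
    have hsub : Metric.closedBall (0 : EuclideanSpace ℝ (Fin n)) r ⊆ D :=
      (Metric.closedBall_subset_ball hrr0).trans hball
    have hsphD : Metric.sphere (0 : EuclideanSpace ℝ (Fin n)) r ⊆ D :=
      Metric.sphere_subset_closedBall.trans hsub
    have hne : (Metric.sphere (0 : EuclideanSpace ℝ (Fin n)) r).Nonempty := by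
      refine ⟨r • EuclideanSpace.single ⟨0, Nat.pos_of_ne_zero hn⟩ (1 : ℝ), ?_⟩
      simp [Metric.mem_sphere, dist_zero_right, norm_smul, EuclideanSpace.norm_single,
        abs_of_pos hrpos]
    have hVcont : ContinuousOn V D := hVcd.continuousOn
    obtain ⟨y0, hy0, hy0min⟩ :=
      (isCompact_sphere (0 : EuclideanSpace ℝ (Fin n)) r).exists_isMinOn hne
        (hVcont.mono hsphD)
    set m : ℝ := V y0 with hmdef
    have hy0ne : y0 ≠ 0 := by
      intro h
      rw [Metric.mem_sphere, dist_zero_right, h, norm_zero] at hy0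
      exact hrpos.ne hy0
    have hm : 0 < m := hVpos y0 (hsphD hy0) hy0ne
    have hC0 : ContinuousAt V 0 := hVcont.continuousAt (hD.mem_nhds h0)
    obtain ⟨δ0, hδ0, hδ0lt⟩ := Metric.continuousAt_iff.1 hC0 m hm
    refine ⟨min δ0 r, lt_min hδ0 hrpos, ?_⟩
    intro x hxD hx' hx0 t ht
    have hVx0 : V (x 0) < m := by
      have h1 : dist (x 0) 0 < δ0 := by
        rw [dist_zero_right]
        exact lt_of_lt_of_le hx0 (min_le_left _ _)
      have := hδ0lt h1
      rw [hV0, Real.dist_eq, sub_zero] at this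
      exact lt_of_le_of_lt (le_abs_self _) this
    have hderiv : ∀ s, 0 ≤ s → HasDerivAt (V ∘ x) (fderiv ℝ V (x s) (f (x s))) s := by
      intro s hs
      have hdV : DifferentiableAt ℝ V (x s) :=
        (hVcd.differentiableOn one_ne_zero).differentiableAt (hD.mem_nhds (hxD s hs))
      exact hdV.hasFDerivAt.comp_hasDerivAt s (hx' s hs)
    have hcont : ContinuousOn (V ∘ x) (Set.Ici 0) := fun s hs =>
      ((hderiv s hs).continuousAt).continuousWithinAt
    have hanti : AntitoneOn (V ∘ x) (Set.Ici 0) := by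
      apply antitoneOn_of_deriv_nonpos (convex_Ici 0) hcont
      · intro s hs
        rw [interior_Ici] at hs
        exact ((hderiv s hs.le).differentiableAt).differentiableWithinAt
      · intro s hs
        rw [interior_Ici] at hs
        rw [(hderiv s hs.le).deriv]
        by_cases hxs : x s = 0
        · rw [hxs, hf0]
          simp
        · have h1 := hLie (x s) (hxD s hs.le) hxs
          rw [fderiv_apply_eq_lieDeriv]
          exact h1.le
    suffices h : ‖x t‖ < r by linarith
    by_contra hc
    push_neg at hc
    have hxcont : ContinuousOn (fun s => ‖x s‖) (Set.Icc 0 t) := fun s hs =>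
      (((hx' s hs.1).continuousAt).norm).continuousWithinAt
    have hmem : r ∈ Set.Icc ‖x 0‖ ‖x t‖ :=
      ⟨le_of_lt (lt_of_lt_of_le hx0 (min_le_right _ _)), hc⟩
    obtain ⟨c, hc1, hc2⟩ := intermediate_value_Icc ht hxcont hmem
    have hsph : x c ∈ Metric.sphere (0 : EuclideanSpace ℝ (Fin n)) r := by
      rw [Metric.mem_sphere, dist_zero_right]
      exact hc2
    have h1 : m ≤ V (x c) := hy0min hsph
    have h2 : (V ∘ x) c ≤ (V ∘ x) 0 := hanti (Set.self_mem_Ici) hc1.1 hc1.1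
    simp only [Function.comp_apply] at h2
    linarith
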